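/- arXiv:hep-th/0004049 — 5 statements merged into one kernel-verified Lean document; each statement's English description precedes it below -/
import Mathlib

section
/- Algebraic Poincaré lemma in form degree 0 (Theorem 6.1, part H^0(d) ≅ ℝ): if f ∈ R satisfies D_i f = 0 for every i ∈ Fin n, then f is a constant polynomial, i.e. f lies in the image of the constant embedding C : k → R. -/
/-!
A total derivative `D_i` is the derivation induced by the injective shift
`s : (φ, J) ↦ (φ, J + e_i)` of the jet variables, and `⁅∂_{s p}, D_i⁆ = ∂_p`. If `D_i f = 0`
and `p` is a variable of `f` with `J_i` maximal, then `s p` does not occur in `f`, so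
`∂_p f = ∂_{s p} (D_i f) - D_i (∂_{s p} f) = 0`, which is impossible in characteristic zero.
-/

open MvPolynomial

/-- The jet-space total derivative `D_i`: the unique `k`-derivation of the jet
polynomial ring with `D_i X(φ, J) = X(φ, J + e_i)`. -/
noncomputable def totalDeriv (k : Type) [CommRing k] (Φ : Type) (n : ℕ) (i : Fin n) :
    Derivation k (MvPolynomial (Φ × (Fin n →₀ ℕ)) k) (MvPolynomial (Φ × (Fin n →₀ ℕ)) k) :=
  mkDerivation k (fun p : Φ × (Fin n →₀ ℕ) => X (p.1, p.2 + Finsupp.single i 1))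

namespace MvPolynomial

variable {R σ : Type*}

theorem pderiv_ne_zero_of_mem_vars [CommSemiring R] [NoZeroDivisors R] [CharZero R]
    {p : σ} {f : MvPolynomial σ R} (hp : p ∈ f.vars) : pderiv p f ≠ 0 := by
  classical
  obtain ⟨d, hd, hdp⟩ := (mem_vars_iff_mem_support p).mp hp
  have hle : Finsupp.single p 1 ≤ d := Finsupp.single_le_iff.mpr (Nat.one_le_iff_ne_zero.mpr
    (Finsupp.mem_support_iff.mp hdp))
  intro h0
  have hcoeff := coeff_pderiv (i := p) f (d - Finsupp.single p 1)
  rw [tsub_add_cancel_of_le hle, h0, coeff_zero] at hcoeff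
  exact mul_ne_zero (mem_support_iff.mp hd) (Nat.cast_add_one_ne_zero _) hcoeff.symm

variable [CommRing R] {s : σ → σ}

theorem lie_pderiv_mkDerivation_X_comp (hs : Function.Injective s) (p : σ) :
    ⁅pderiv (R := R) (s p), mkDerivation R (fun q => (X (s q) : MvPolynomial σ R))⁆ =
      pderiv p := by
  classical
  refine derivation_ext fun q => ?_
  simp only [Derivation.commutator_apply, mkDerivation_X, pderiv_X, Pi.single_apply, hs.eq_iff]
  split_ifs <;> simp

theorem vars_eq_empty_of_mkDerivation_X_comp_eq_zero [NoZeroDivisors R] [CharZero R]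
    (hs : Function.Injective s) (height : σ → ℕ) (h_lt : ∀ q, height q < height (s q))
    {f : MvPolynomial σ R} (hf : mkDerivation R (fun q => (X (s q) : MvPolynomial σ R)) f = 0) :
    f.vars = ∅ := by
  by_contra hne
  obtain ⟨p, hp, hmax⟩ :=
    f.vars.exists_max_image height (Finset.nonempty_iff_ne_empty.mpr hne)
  have hsp : s p ∉ f.vars := fun hmem => (hmax _ hmem).not_gt (h_lt p)
  have h_comm := Derivation.congr_fun (lie_pderiv_mkDerivation_X_comp (R := R) hs p) f
  rw [Derivation.commutator_apply, hf, pderiv_eq_zero_of_notMem_vars hsp, map_zero, map_zero,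
    sub_zero] at h_comm
  exact pderiv_ne_zero_of_mem_vars hp h_comm.symm

end MvPolynomial

theorem algebraic_poincare_degree_zero_general
    (k : Type) [Field k] [CharZero k] (Φ : Type) (n : ℕ) (hn : 1 ≤ n)
    (f : MvPolynomial (Φ × (Fin n →₀ ℕ)) k)
    (hf : ∀ i : Fin n, totalDeriv k Φ n i f = 0) :
    ∃ c : k, f = C c := by
  let i : Fin n := ⟨0, hn⟩
  have h_inj : Function.Injective fun p : Φ × (Fin n →₀ ℕ) => (p.1, p.2 + Finsupp.single i 1) :=
    fun p q h => Prod.ext (Prod.ext_iff.mp h).1 (add_right_cancel (Prod.ext_iff.mp h).2)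
  have h_vars : f.vars = ∅ :=
    vars_eq_empty_of_mkDerivation_X_comp_eq_zero h_inj (fun p => p.2 i) (by simp) (hf i)
  exact ⟨_, vars_eq_empty_iff_eq_C.mp h_vars⟩

/-- Algebraic Poincaré lemma in form degree 0: a local function annihilated by all
total derivatives `D_i` is a constant. -/
theorem algebraic_poincare_degree_zero
    (k : Type) [Field k] [CharZero k] (Φ : Type) [Nonempty Φ] (n : ℕ) (hn : 1 ≤ n)
    (f : MvPolynomial (Φ × (Fin n →₀ ℕ)) k)
    (hf : ∀ i : Fin n, totalDeriv k Φ n i f = 0) :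
    ∃ c : k, f = C c :=
  algebraic_poincare_degree_zero_general k Φ n hn f hf
end

section
/- Time-derivative map of Lemma 7.1: for all p, m ∈ ℕ, the derivation ∂₀ maps V^p_m into V^p_{m+1}, and for p ≥ 1 the restriction of ∂₀ to V^p_m is injective; in particular, if ω_1, …, ω_r ∈ V^p_m are linearly independent over k (p ≥ 1), then ∂₀ω_1, …, ∂₀ω_r ∈ V^p_{m+1} are linearly independent. -/
/-!
Let `L` be the lowering derivation `X(A,l) ↦ l X(A,l-1)`. On generators one checks that
`[L, ∂₀]` is the Euler derivation, which is multiplication by `p` on polynomials of degree `p`: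
`L` and `∂₀` behave like the lowering and raising operators of `sl₂`. If `∂₀ f = 0`, this gives
`∂₀ (L^(j+1) f) = -(j+1) p • L^j f`. As `L` removes one time derivative, `L^(m+1) f = 0` for
`f ∈ V^p_m`, and descending in `j` (using `p ≠ 0` in characteristic zero) yields `f = 0`.
-/

open MvPolynomial

/-- The time derivative `∂₀` on the ghost polynomial algebra: the unique
`k`-derivation with `∂₀ X(A, l) = X(A, l + 1)`. -/
noncomputable def timeDeriv (k : Type) [CommRing k] (N : ℕ) :
    Derivation k (MvPolynomial (Fin N × ℕ) k) (MvPolynomial (Fin N × ℕ) k) :=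
  mkDerivation k (fun p : Fin N × ℕ => X (p.1, p.2 + 1))

/-- `V^p_m`: the subspace of polynomials in the ghost variables `η^{A(l)}` that are
homogeneous of degree `p` in the variables and carry exactly `m` time derivatives
(weighted-homogeneous of weight `m` for the weight `w(A, l) = l`). -/
noncomputable def Vpm (k : Type) [Field k] (N p m : ℕ) :
    Submodule k (MvPolynomial (Fin N × ℕ) k) :=
  homogeneousSubmodule (Fin N × ℕ) k p ⊓
    weightedHomogeneousSubmodule k (fun x : Fin N × ℕ => x.2) m

theorem Finsupp.weight_natCast {σ : Type*} (w : σ → ℕ) (d : σ →₀ ℕ) :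
    Finsupp.weight (fun i => (w i : ℤ)) d = Finsupp.weight w d := by
  simp [Finsupp.weight_apply, Finsupp.sum]

namespace MvPolynomial

variable {R σ M : Type*} [CommSemiring R]

lemma monomial_sub_single_one_mul_X {d : σ →₀ ℕ} {i : σ} (hi : d i ≠ 0) (r : R) :
    monomial (d - Finsupp.single i 1) r * X i = monomial d r := by
  rw [X, monomial_mul, mul_one, Finsupp.sub_add_single_one_cancel hi]

protected theorem IsWeightedHomogeneous.mkDerivation [AddCommMonoid M] {w : σ → M} {a m : M}
    {g : σ → MvPolynomial σ R} (hg : ∀ i, (g i).IsWeightedHomogeneous w (w i + a))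
    {f : MvPolynomial σ R} (hf : f.IsWeightedHomogeneous w m) :
    (mkDerivation R g f).IsWeightedHomogeneous w (m + a) := by
  induction hf using IsWeightedHomogeneous.induction_on with
  | zero => simpa using isWeightedHomogeneous_zero R w (m + a)
  | add p q _ _ hp hq => simpa using hp.add hq
  | monomial d r hd =>
    rw [mkDerivation_monomial, ← mem_weightedHomogeneousSubmodule]
    refine Submodule.smul_mem _ _ (Submodule.sum_mem _ fun i hi => ?_)
    have hdi : d i ≠ 0 := Finsupp.mem_support_iff.mp hi
    have := (isWeightedHomogeneous_monomial w (d - Finsupp.single i 1) (d i : R) rfl).mul (hg i)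
    rwa [← add_assoc, Finsupp.weight_sub_single_add hdi, hd] at this

protected theorem IsHomogeneous.mkDerivation {g : σ → MvPolynomial σ R}
    (hg : ∀ i, (g i).IsHomogeneous 1) {f : MvPolynomial σ R} {n : ℕ} (hf : f.IsHomogeneous n) :
    (mkDerivation R g f).IsHomogeneous n :=
  IsWeightedHomogeneous.mkDerivation (w := 1) (a := 0) hg hf

theorem IsWeightedHomogeneous.mkDerivation_smul_X {w : σ → ℕ} {n : ℕ} {f : MvPolynomial σ R}
    (hf : f.IsWeightedHomogeneous w n) :
    mkDerivation R (fun i => w i • X i) f = n • f := by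
  induction hf using IsWeightedHomogeneous.induction_on with
  | zero => simp
  | add p q _ _ hp hq => rw [map_add, hp, hq, smul_add]
  | monomial d r hd =>
    have hterm : ∀ i ∈ d.support, monomial (d - Finsupp.single i 1) (d i : R) • (w i • X i) =
        (d i * w i) • monomial d (1 : R) := by
      intro i hi
      rw [smul_eq_mul, mul_smul_comm,
        monomial_sub_single_one_mul_X (Finsupp.mem_support_iff.mp hi), smul_monomial, smul_monomial]
      simp [mul_comm]
    rw [mkDerivation_monomial, Finsupp.sum, Finset.sum_congr rfl hterm, ← Finset.sum_smul, ← hd,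
      Finsupp.weight_apply, Finsupp.sum, smul_comm, smul_monomial, smul_monomial]
    simp only [smul_eq_mul, mul_one, smul_monomial]

theorem IsHomogeneous.mkDerivation_X {n : ℕ} {f : MvPolynomial σ R} (hf : f.IsHomogeneous n) :
    mkDerivation R X f = n • f := by
  simpa using IsWeightedHomogeneous.mkDerivation_smul_X hf

theorem IsWeightedHomogeneous.natCast_weight {w : σ → ℕ} {n : ℕ} {f : MvPolynomial σ R}
    (hf : f.IsWeightedHomogeneous w n) :
    f.IsWeightedHomogeneous (fun i => (w i : ℤ)) n := fun d hd => by
  rw [Finsupp.weight_natCast, hf hd]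

theorem IsWeightedHomogeneous.eq_zero_of_neg {w : σ → ℕ} {n : ℤ} {f : MvPolynomial σ R}
    (hf : f.IsWeightedHomogeneous (fun i => (w i : ℤ)) n) (hn : n < 0) : f = 0 :=
  hf.eq_zero_of_no_monomials fun d => by rw [Finsupp.weight_natCast]; omega

end MvPolynomial

theorem Module.End.eq_zero_of_commutator_eq_smul {K V : Type*} [Field K] [CharZero K]
    [AddCommGroup V] [Module K V] {E L : Module.End K V} {W : Submodule K V}
    (hLW : Set.MapsTo L W W) {c : K} (hc : c ≠ 0)
    (hcomm : ∀ x ∈ W, L (E x) - E (L x) = c • x)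
    {v : V} (hv : v ∈ W) (hEv : E v = 0) {n : ℕ} (hLv : (L ^ n) v = 0) : v = 0 := by
  have hEL : ∀ x ∈ W, E (L x) = L (E x) - c • x := fun x hx => by rw [← hcomm x hx]; abel
  have hpowW : ∀ j, (L ^ j) v ∈ W := by
    intro j
    induction j with
    | zero => exact hv
    | succ j ih => rw [pow_succ', Module.End.mul_apply]; exact hLW ih
  have hE : ∀ j : ℕ, E ((L ^ (j + 1)) v) = -((j + 1 : K) * c) • (L ^ j) v := by
    intro j
    induction j with
    | zero => simp [hEL v hv, hEv]
    | succ j ih =>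
      rw [pow_succ' L (j + 1), Module.End.mul_apply, hEL _ (hpowW _), ih, map_smul,
        ← Module.End.mul_apply, ← pow_succ', ← sub_smul]
      congr 1
      push_cast
      ring
  induction n with
  | zero => simpa using hLv
  | succ n ih =>
    refine ih ?_
    have := hE n
    rw [hLv, map_zero, eq_comm, smul_eq_zero] at this
    exact this.resolve_left (neg_ne_zero.mpr (mul_ne_zero (Nat.cast_add_one_ne_zero n) hc))

section TimeDerivative

variable (k : Type) [CommRing k] (N : ℕ)

-- The truncated `l - 1` is harmless: the coefficient `l` vanishes when `l = 0`.
noncomputable def timeLowering :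
    Derivation k (MvPolynomial (Fin N × ℕ) k) (MvPolynomial (Fin N × ℕ) k) :=
  mkDerivation k (fun v : Fin N × ℕ => (v.2 : k) • X (v.1, v.2 - 1))

theorem lie_timeLowering_timeDeriv :
    ⁅timeLowering k N, timeDeriv k N⁆ = mkDerivation k X := by
  refine derivation_ext fun ⟨A, l⟩ => ?_
  simp only [Derivation.commutator_apply, timeLowering, timeDeriv, mkDerivation_X,
    Derivation.map_smul]
  cases l with
  | zero => simp
  | succ l =>
    simp only [Nat.add_sub_cancel]
    push_cast
    rw [← sub_smul, add_sub_cancel_left, one_smul]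

variable {k N}

theorem timeDeriv_isHomogeneous {f : MvPolynomial (Fin N × ℕ) k} {p : ℕ}
    (hf : f.IsHomogeneous p) : (timeDeriv k N f).IsHomogeneous p :=
  IsHomogeneous.mkDerivation (g := fun v => X (v.1, v.2 + 1)) (fun _ => isHomogeneous_X k _) hf

theorem timeDeriv_isWeightedHomogeneous {f : MvPolynomial (Fin N × ℕ) k} {m : ℕ}
    (hf : f.IsWeightedHomogeneous (fun v => v.2) m) :
    (timeDeriv k N f).IsWeightedHomogeneous (fun v => v.2) (m + 1) :=
  IsWeightedHomogeneous.mkDerivation (fun v => isWeightedHomogeneous_X k _ (v.1, v.2 + 1)) hf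

theorem timeLowering_isHomogeneous {f : MvPolynomial (Fin N × ℕ) k} {p : ℕ}
    (hf : f.IsHomogeneous p) : (timeLowering k N f).IsHomogeneous p := by
  unfold timeLowering
  exact IsHomogeneous.mkDerivation
    (fun _ => by rw [smul_eq_C_mul]; exact isHomogeneous_C_mul_X _ _) hf

-- With `ℤ`-valued weights `L` lowers the weight by one uniformly, including on `X(A,0) ↦ 0`.
theorem timeLowering_isWeightedHomogeneous {f : MvPolynomial (Fin N × ℕ) k} {m : ℤ}
    (hf : f.IsWeightedHomogeneous (fun v => (v.2 : ℤ)) m) :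
    (timeLowering k N f).IsWeightedHomogeneous (fun v => (v.2 : ℤ)) (m - 1) := by
  rw [sub_eq_add_neg]
  unfold timeLowering
  refine IsWeightedHomogeneous.mkDerivation (fun ⟨A, l⟩ => ?_) hf
  cases l with
  | zero => simpa using isWeightedHomogeneous_zero k _ _
  | succ l =>
    rw [smul_eq_C_mul, Nat.add_sub_cancel]
    convert (isWeightedHomogeneous_X k (fun v : Fin N × ℕ => (v.2 : ℤ)) (A, l)).C_mul _ using 1
    push_cast
    ring

theorem timeLowering_pow_apply_eq_zero {f : MvPolynomial (Fin N × ℕ) k} {m : ℕ}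
    (hf : f.IsWeightedHomogeneous (fun v => v.2) m) :
    ((timeLowering k N : Module.End k _) ^ (m + 1)) f = 0 := by
  have hpow : ∀ j : ℕ, (((timeLowering k N : Module.End k _) ^ j) f).IsWeightedHomogeneous
      (fun v => (v.2 : ℤ)) (m - j) := by
    intro j
    induction j with
    | zero => simpa using hf.natCast_weight
    | succ j ih =>
      rw [pow_succ', Module.End.mul_apply, Nat.cast_succ, ← sub_sub]
      exact timeLowering_isWeightedHomogeneous ih
  exact (hpow (m + 1)).eq_zero_of_neg (by omega)

end TimeDerivative

theorem disjoint_Vpm_ker_timeDeriv (k : Type) [Field k] [CharZero k] (N : ℕ) {p : ℕ}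
    (hp : p ≠ 0) (m : ℕ) :
    Disjoint (Vpm k N p m) (LinearMap.ker (timeDeriv k N : Module.End k _)) := by
  refine Submodule.disjoint_def.mpr fun f hf hEf => Module.End.eq_zero_of_commutator_eq_smul
    (W := homogeneousSubmodule _ k p) (fun x hx => timeLowering_isHomogeneous hx)
    (Nat.cast_ne_zero.mpr hp) (fun x hx => ?_) hf.1 hEf (timeLowering_pow_apply_eq_zero hf.2)
  rw [Nat.cast_smul_eq_nsmul, ← IsHomogeneous.mkDerivation_X hx, ← lie_timeLowering_timeDeriv,
    Derivation.commutator_apply]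
  rfl

theorem timeDeriv_maps_and_injective_general
    (k : Type) [Field k] [CharZero k] (N : ℕ) (p m : ℕ) :
    (∀ f ∈ Vpm k N p m, timeDeriv k N f ∈ Vpm k N p (m + 1)) ∧
    (1 ≤ p → ∀ f ∈ Vpm k N p m, timeDeriv k N f = 0 → f = 0) ∧
    (1 ≤ p → ∀ (r : ℕ) (ω : Fin r → MvPolynomial (Fin N × ℕ) k),
      (∀ i, ω i ∈ Vpm k N p m) → LinearIndependent k ω →
      LinearIndependent k (fun i => timeDeriv k N (ω i))) := by
  have hker (hp : 1 ≤ p) := disjoint_Vpm_ker_timeDeriv k N (Nat.one_le_iff_ne_zero.mp hp) m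
  refine ⟨fun f hf => ⟨timeDeriv_isHomogeneous hf.1, timeDeriv_isWeightedHomogeneous hf.2⟩,
    fun hp f hf hf0 => Submodule.disjoint_def.mp (hker hp) f hf hf0,
    fun hp r ω hω hli => hli.map ((hker hp).mono_left ?_)⟩
  exact Submodule.span_le.mpr (Set.range_subset_iff.mpr hω)

/-- The time derivative maps `V^p_m` into `V^p_{m+1}`; for `p ≥ 1` it is injective
on `V^p_m`, so it sends linearly independent families of elements of `V^p_m` to
linearly independent families in `V^p_{m+1}`. -/
theorem timeDeriv_maps_and_injective
    (k : Type) [Field k] [CharZero k] (N : ℕ) (hN : 1 ≤ N) (p m : ℕ) :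
    (∀ f ∈ Vpm k N p m, timeDeriv k N f ∈ Vpm k N p (m + 1)) ∧
    (1 ≤ p → ∀ f ∈ Vpm k N p m, timeDeriv k N f = 0 → f = 0) ∧
    (1 ≤ p → ∀ (r : ℕ) (ω : Fin r → MvPolynomial (Fin N × ℕ) k),
      (∀ i, ω i ∈ Vpm k N p m) → LinearIndependent k ω →
      LinearIndependent k (fun i => timeDeriv k N (ω i))) :=
  timeDeriv_maps_and_injective_general k N p m
end

section
/- Key step in the computation of H(γ) (Theorem 7.1): (i) for every G ∈ A, the element γG lies in the ideal of A generated by the variables {v_α : α ∈ κ}; (ii) consequently, if F belongs to the subalgebra of A generated by the variables {t_i : i ∈ ι} and F = γG for some G ∈ A, then F = 0. (In the paper's language: no nonzero element of the algebra generated by the γ-invariant generators T is γ-exact.) -/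
open MvPolynomial

/-- The BRST differential `γ` on the polynomial algebra generated by the variables
`t_i`, `u_α`, `v_α`: the unique `k`-derivation with `γ t_i = 0`, `γ u_α = v_α`,
`γ v_α = 0`. -/
noncomputable def gammaDeriv (k : Type) [CommRing k] (ι κ : Type) :
    Derivation k (MvPolynomial (ι ⊕ κ ⊕ κ) k) (MvPolynomial (ι ⊕ κ ⊕ κ) k) :=
  mkDerivation k (Sum.elim (fun _ : ι => 0)
    (Sum.elim (fun α : κ => X (Sum.inr (Sum.inr α))) (fun _ : κ => 0)))

/-- (i) `γ G` always lies in the ideal generated by the variables `v_α`;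
(ii) hence no nonzero element of the subalgebra generated by the `γ`-invariant
variables `t_i` is `γ`-exact. -/
theorem gamma_exact_in_v_ideal_and_no_exact_invariants
    (k : Type) [CommRing k] (ι κ : Type) :
    (∀ G : MvPolynomial (ι ⊕ κ ⊕ κ) k,
      gammaDeriv k ι κ G ∈
        Ideal.span (Set.range fun α : κ =>
          (X (Sum.inr (Sum.inr α)) : MvPolynomial (ι ⊕ κ ⊕ κ) k))) ∧
    (∀ F ∈ Algebra.adjoin k
        (Set.range fun i : ι => (X (Sum.inl i) : MvPolynomial (ι ⊕ κ ⊕ κ) k)),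
      (∃ G : MvPolynomial (ι ⊕ κ ⊕ κ) k, gammaDeriv k ι κ G = F) → F = 0) := by
  set I : Ideal (MvPolynomial (ι ⊕ κ ⊕ κ) k) :=
    Ideal.span (Set.range fun α : κ =>
      (X (Sum.inr (Sum.inr α)) : MvPolynomial (ι ⊕ κ ⊕ κ) k)) with hI
  have hX : ∀ n : ι ⊕ κ ⊕ κ, gammaDeriv k ι κ (X n) ∈ I := by
    intro n
    have := mkDerivation_X k (Sum.elim (fun _ : ι => (0 : MvPolynomial (ι ⊕ κ ⊕ κ) k))
      (Sum.elim (fun α : κ => X (Sum.inr (Sum.inr α))) (fun _ : κ => 0))) n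
    rw [gammaDeriv, this]
    rcases n with i | α | α
    · simp
    · exact Ideal.subset_span ⟨α, rfl⟩
    · simp
  have part1 : ∀ G : MvPolynomial (ι ⊕ κ ⊕ κ) k, gammaDeriv k ι κ G ∈ I := by
    intro G
    induction G using MvPolynomial.induction_on with
    | C a => simp
    | add p q hp hq => rw [map_add]; exact I.add_mem hp hq
    | mul_X p n hp =>
        rw [Derivation.leibniz]
        exact I.add_mem (I.smul_mem _ (hX n)) (I.smul_mem _ hp)
  refine ⟨part1, ?_⟩
  intro F hF ⟨G, hG⟩
  -- the algebra map killing the v's and fixing t's and u's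
  set φ : MvPolynomial (ι ⊕ κ ⊕ κ) k →ₐ[k] MvPolynomial (ι ⊕ κ ⊕ κ) k :=
    aeval (Sum.elim (fun i : ι => X (Sum.inl i))
      (Sum.elim (fun α : κ => X (Sum.inr (Sum.inl α))) (fun _ : κ => 0))) with hφ
  have hfix : φ F = F := by
    refine Algebra.adjoin_induction (hx := hF) ?_ ?_ ?_ ?_
    · rintro x ⟨i, rfl⟩; simp [hφ]
    · intro r; simp [hφ]
    · intro x y _ _ hx hy; simp [map_add, hx, hy]
    · intro x y _ _ hx hy; simp [map_mul, hx, hy]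
  have hzero : φ F = 0 := by
    have hFI : F ∈ I := hG ▸ part1 G
    refine Submodule.span_induction (hx := hFI) ?_ ?_ ?_ ?_
    · rintro x ⟨α, rfl⟩; simp [hφ]
    · simp
    · intro x y _ _ hx hy; simp [map_add, hx, hy]
    · intro a x _ hx; simp [smul_eq_mul, map_mul, hx]
  rw [← hfix, hzero]
end

section
/- Filtration argument for acyclicity (the engine of Theorem 10.1, H_i(δ) = 0 for i > 0): let δ₀ : M →ₗ M have degree 0, δ₁ : M →ₗ M have degree 1, set δ = δ₀ + δ₁, and assume δ ∘ δ = 0. Assume δ₁-acyclicity: every x ∈ M_0 with δ₁ x = 0 is zero, and for every n ≥ 1, every x ∈ M_n with δ₁ x = 0 lies in δ₁(M_{n−1}). Then every a ∈ M with δ a = 0 lies in the range of δ; i.e., the cohomology of δ on M vanishes. -/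
/-!
Filter `M` by `F N = ⨁_{i ≤ N} M_i`; by exhaustion every cocycle lies in some `F N`, and we induct
on `N`. Write a cocycle `a ∈ F N` as `t + a'` with `t ∈ M_N` and `a' ∈ F (N-1)`. The component of
`δ a = 0` in degree `N + 1` is `δ₁ t`, so `δ₁ t = 0`. For `N = 0` this forces `a = 0`; otherwise
`t = δ₁ y` with `y ∈ M_{N-1}`, and `a - δ y` is a cocycle in `F (N-1)` because `δ ∘ δ = 0`.
-/

namespace GradedAcyclicity

variable {R M : Type*} [Ring R] [AddCommGroup M] [Module R M]

def HasDegree (Mn : ℕ → Submodule R M) (f : M →ₗ[R] M) (r : ℕ) : Prop :=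
  ∀ n : ℕ, ∀ x ∈ Mn n, f x ∈ Mn (n + r)

def filtrationLE (Mn : ℕ → Submodule R M) (N : ℕ) : Submodule R M :=
  ⨆ i ≤ N, Mn i

variable {Mn : ℕ → Submodule R M}

theorem mem_filtrationLE_of_mem {i N : ℕ} (hiN : i ≤ N) {x : M} (hx : x ∈ Mn i) :
    x ∈ filtrationLE Mn N :=
  le_iSup₂_of_le (f := fun j (_ : j ≤ N) => Mn j) i hiN le_rfl hx

theorem filtrationLE_mono : Monotone (filtrationLE Mn) :=
  fun _ _ hNN' => biSup_mono fun _ hi => hi.trans hNN'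

theorem filtrationLE_succ (N : ℕ) :
    filtrationLE Mn (N + 1) = filtrationLE Mn N ⊔ Mn (N + 1) :=
  Nat.iSup_le_succ Mn N

theorem filtrationLE_zero : filtrationLE Mn 0 = Mn 0 := by
  simp [filtrationLE]

theorem exists_mem_filtrationLE (hMn : iSup Mn = ⊤) (x : M) : ∃ N, x ∈ filtrationLE Mn N := by
  have hx : x ∈ ⨆ N, filtrationLE Mn N := by
    simp only [filtrationLE]
    rw [biSup_le_eq_iSup, hMn]
    trivial
  exact (Submodule.mem_iSup_of_directed _ filtrationLE_mono.directed_le).mp hx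

theorem eq_zero_of_mem_of_mem_filtrationLE (hind : iSupIndep Mn) {N : ℕ} {x : M}
    (hx : x ∈ Mn (N + 1)) (hxF : x ∈ filtrationLE Mn N) : x = 0 :=
  Submodule.disjoint_def.mp (hind.disjoint_biSup (y := {i | i ≤ N}) (by simp)) x hx hxF

theorem HasDegree.mem_filtrationLE {f : M →ₗ[R] M} {r : ℕ} (hf : HasDegree Mn f r) {N : ℕ}
    {x : M} (hx : x ∈ filtrationLE Mn N) : f x ∈ filtrationLE Mn (N + r) := by
  have hle : filtrationLE Mn N ≤ (filtrationLE Mn (N + r)).comap f :=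
    iSup₂_le fun i hi y hy => mem_filtrationLE_of_mem (by omega) (hf i y hy)
  exact hle hx

variable {δ₀ δ₁ : M →ₗ[R] M}

theorem eq_zero_of_mem_zero_of_cocycle (hind : iSupIndep Mn) (h₀ : HasDegree Mn δ₀ 0)
    (h₁ : HasDegree Mn δ₁ 1) (hacy₀ : ∀ x ∈ Mn 0, δ₁ x = 0 → x = 0)
    {a : M} (ha : a ∈ Mn 0) (hδa : (δ₀ + δ₁) a = 0) : a = 0 := by
  have hδ₁a : δ₁ a = -δ₀ a := eq_neg_of_add_eq_zero_right hδa
  refine hacy₀ a ha (eq_zero_of_mem_of_mem_filtrationLE hind (N := 0) (h₁ 0 a ha) ?_)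
  rw [hδ₁a, filtrationLE_zero]
  exact neg_mem (h₀ 0 a ha)

theorem exists_sub_mem_filtrationLE_of_cocycle (hind : iSupIndep Mn) (h₀ : HasDegree Mn δ₀ 0)
    (h₁ : HasDegree Mn δ₁ 1)
    (hacy : ∀ n : ℕ, ∀ x ∈ Mn (n + 1), δ₁ x = 0 → ∃ y ∈ Mn n, δ₁ y = x)
    {N : ℕ} {a : M} (ha : a ∈ filtrationLE Mn (N + 1)) (hδa : (δ₀ + δ₁) a = 0) :
    ∃ y, a - (δ₀ + δ₁) y ∈ filtrationLE Mn N := by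
  rw [filtrationLE_succ, Submodule.mem_sup] at ha
  obtain ⟨a', ha', t, ht, rfl⟩ := ha
  have hrest : δ₀ t + (δ₀ + δ₁) a' ∈ filtrationLE Mn (N + 1) :=
    add_mem (mem_filtrationLE_of_mem le_rfl (h₀ _ t ht))
      (add_mem (filtrationLE_mono N.le_succ (h₀.mem_filtrationLE ha'))
        (h₁.mem_filtrationLE ha'))
  have hδ₁t : δ₁ t = -(δ₀ t + (δ₀ + δ₁) a') := by
    rw [eq_neg_iff_add_eq_zero, ← hδa, map_add, LinearMap.add_apply δ₀ δ₁ t]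
    abel
  have htop : δ₁ t = 0 :=
    eq_zero_of_mem_of_mem_filtrationLE hind (h₁ _ t ht) (hδ₁t ▸ neg_mem hrest)
  obtain ⟨y, hy, rfl⟩ := hacy N t ht htop
  refine ⟨y, ?_⟩
  have heq : a' + δ₁ y - (δ₀ + δ₁) y = a' - δ₀ y := by
    rw [LinearMap.add_apply]
    abel
  rw [heq]
  exact sub_mem ha' (h₀.mem_filtrationLE (mem_filtrationLE_of_mem le_rfl hy))

theorem exists_eq_of_cocycle_mem_filtrationLE (hind : iSupIndep Mn) (h₀ : HasDegree Mn δ₀ 0)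
    (h₁ : HasDegree Mn δ₁ 1) (hnil : (δ₀ + δ₁) ∘ₗ (δ₀ + δ₁) = 0)
    (hacy₀ : ∀ x ∈ Mn 0, δ₁ x = 0 → x = 0)
    (hacy : ∀ n : ℕ, ∀ x ∈ Mn (n + 1), δ₁ x = 0 → ∃ y ∈ Mn n, δ₁ y = x) (N : ℕ) :
    ∀ a ∈ filtrationLE Mn N, (δ₀ + δ₁) a = 0 → ∃ b, (δ₀ + δ₁) b = a := by
  induction N with
  | zero =>
    intro a ha hδa
    rw [filtrationLE_zero] at ha
    exact ⟨0, by rw [map_zero, eq_zero_of_mem_zero_of_cocycle hind h₀ h₁ hacy₀ ha hδa]⟩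
  | succ N ih =>
    intro a ha hδa
    obtain ⟨y, hy⟩ := exists_sub_mem_filtrationLE_of_cocycle hind h₀ h₁ hacy ha hδa
    have hδδy : (δ₀ + δ₁) ((δ₀ + δ₁) y) = 0 := LinearMap.congr_fun hnil y
    obtain ⟨b, hb⟩ := ih _ hy (by rw [map_sub, hδa, hδδy, sub_zero])
    exact ⟨b + y, by rw [map_add, hb, sub_add_cancel]⟩

end GradedAcyclicity

open GradedAcyclicity in
/-- Filtration argument for acyclicity: if `δ = δ₀ + δ₁` is a differential
(`δ² = 0`) with `δ₀` of degree `0` and `δ₁` of degree `1` for an internal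
ℕ-grading of `M`, and `δ₁` is acyclic in the graded sense (its kernel vanishes in
degree `0` and, in degree `n ≥ 1`, is contained in `δ₁(M_{n-1})`), then every
`δ`-cocycle is a `δ`-coboundary. -/
theorem filtration_acyclicity
    {R M : Type} [CommRing R] [AddCommGroup M] [Module R M]
    (Mn : ℕ → Submodule R M) (hM : DirectSum.IsInternal Mn)
    (δ₀ δ₁ : M →ₗ[R] M)
    (h₀ : ∀ n : ℕ, ∀ x ∈ Mn n, δ₀ x ∈ Mn (n + 0))
    (h₁ : ∀ n : ℕ, ∀ x ∈ Mn n, δ₁ x ∈ Mn (n + 1))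
    (hnil : (δ₀ + δ₁) ∘ₗ (δ₀ + δ₁) = 0)
    (hacy₀ : ∀ x ∈ Mn 0, δ₁ x = 0 → x = 0)
    (hacy : ∀ n : ℕ, ∀ x ∈ Mn (n + 1), δ₁ x = 0 → ∃ y ∈ Mn n, δ₁ y = x) :
    ∀ a : M, (δ₀ + δ₁) a = 0 → ∃ b : M, (δ₀ + δ₁) b = a := by
  intro a hδa
  obtain ⟨N, ha⟩ := exists_mem_filtrationLE hM.submodule_iSup_eq_top a
  exact exists_eq_of_cocycle_mem_filtrationLE hM.submodule_iSupIndep h₀ h₁ hnil hacy₀ hacy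
    N a ha hδa
end

section
/- Filtration argument for relative (mod-d̃) acyclicity (the engine of Theorem 10.2, H_k^{5,inv}(δ | d̃) = 0): assume (i) for every n ≥ 1 and every b ∈ B_n with d b = 0 there exists c ∈ C_{n−1} with b = d' c; and (ii) for every n ≥ 1 and all a ∈ A_n, b ∈ B_n with δ₁ a + d b = 0 there exist e ∈ A_{n−1}, f ∈ B_{n−1} with a = δ₁ e + d f, while for n = 0, δ₁ a + d b = 0 with a ∈ A_0 and b ∈ B_0 implies a = 0. Then for all a ∈ A and b ∈ B with δ a + d b = 0 there exist e ∈ A and f ∈ B such that a = δ e + d f. -/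
/-!
Filter `A` and `B` by the submodules `degreeLT _ N` of elements of degree `< N` and induct on
`N`. In a solution of `δ a + d b = 0` with `a, b` of degree `≤ N`, the component of degree `N + 1`
of the equation reads `δ₁ a_N + d b_N = 0`, so (ii) writes `a_N = δ₁ e + d f`. Subtracting the
coboundary `δ e + d f` from `a` (and `ε f` from `b`) removes the top-degree part of `a`; in the
new equation the only term of degree `N + 1` is `d` of the new top part of `b`, so it vanishes
separately and the rest is a solution of lower degree.
-/

section Filtration

variable {R M M' : Type*}

def degreeLT [Semiring R] [AddCommMonoid M] [Module R M] (T : ℕ → Submodule R M) (N : ℕ) :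
    Submodule R M :=
  ⨆ i < N, T i

section Semiring

variable [Semiring R] [AddCommMonoid M] [Module R M] [AddCommMonoid M'] [Module R M']
  {T : ℕ → Submodule R M} {U : ℕ → Submodule R M'}

@[simp]
theorem degreeLT_zero (T : ℕ → Submodule R M) : degreeLT T 0 = ⊥ := by
  simp [degreeLT]

theorem degreeLT_succ (T : ℕ → Submodule R M) (N : ℕ) :
    degreeLT T (N + 1) = degreeLT T N ⊔ T N :=
  Nat.iSup_lt_succ T N

theorem degreeLT_mono (T : ℕ → Submodule R M) : Monotone (degreeLT T) :=
  fun _ _ hmn ↦ biSup_mono fun _ hi ↦ lt_of_lt_of_le hi hmn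

theorem le_degreeLT_succ (T : ℕ → Submodule R M) (N : ℕ) : T N ≤ degreeLT T (N + 1) :=
  degreeLT_succ T N ▸ le_sup_right

theorem exists_mem_degreeLT (hT : iSup T = ⊤) (x : M) : ∃ N, x ∈ degreeLT T N := by
  have hx : x ∈ ⨆ N, degreeLT T N := by
    simp only [degreeLT, biSup_lt_eq_iSup, hT, Submodule.mem_top]
  exact (Submodule.mem_iSup_of_directed _ (degreeLT_mono T).directed_le).1 hx

theorem map_mem_degreeLT {g : M →ₗ[R] M'} {r : ℕ} (hg : ∀ n, ∀ x ∈ T n, g x ∈ U (n + r))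
    {N : ℕ} {x : M} (hx : x ∈ degreeLT T N) : g x ∈ degreeLT U (N + r) := by
  suffices degreeLT T N ≤ (degreeLT U (N + r)).comap g from this hx
  refine iSup₂_le fun i hi y hy ↦ ?_
  exact le_iSup₂ (f := fun j (_ : j < N + r) ↦ U j) (i + r) (by omega) (hg i y hy)

end Semiring

theorem disjoint_degreeLT [Ring R] [AddCommGroup M] [Module R M] {T : ℕ → Submodule R M}
    (hT : iSupIndep T) (N : ℕ) : Disjoint (T N) (degreeLT T N) :=
  (hT N).mono_right (biSup_mono fun _ hi ↦ hi.ne)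

end Filtration

section Complex

variable {R A B : Type*} [Ring R] [AddCommGroup A] [Module R A] [AddCommGroup B] [Module R B]

theorem map_sub_coboundary_add_eq_zero {δ : A →ₗ[R] A} {ε : B →ₗ[R] B} {d : B →ₗ[R] A}
    (hnil : δ ∘ₗ δ = 0) (hanti : δ ∘ₗ d + d ∘ₗ ε = 0) {a : A} {b : B} (h : δ a + d b = 0)
    (e : A) (f : B) : δ (a - δ e - d f) + d (b - ε f) = 0 := by
  have hδδ : δ (δ e) = 0 := congr($hnil e)
  have hδd : δ (d f) + d (ε f) = 0 := congr($hanti f)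
  calc δ (a - δ e - d f) + d (b - ε f) = (δ a + d b) - δ (δ e) - (δ (d f) + d (ε f)) := by
        simp only [map_sub]; abel
    _ = 0 := by rw [h, hδδ, hδd, sub_zero, sub_zero]

variable {An : ℕ → Submodule R A} {Bn : ℕ → Submodule R B}
  {δ₀ δ₁ : A →ₗ[R] A} {ε₀ ε₁ : B →ₗ[R] B} {d : B →ₗ[R] A}

theorem top_degree_part_eq_zero (hA : iSupIndep An)
    (hδ₀ : ∀ n : ℕ, ∀ x ∈ An n, δ₀ x ∈ An (n + 0))
    (hδ₁ : ∀ n : ℕ, ∀ x ∈ An n, δ₁ x ∈ An (n + 1))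
    (hd : ∀ n : ℕ, ∀ x ∈ Bn n, d x ∈ An (n + 1))
    {N : ℕ} {a' aN : A} {b' bN : B} (ha' : a' ∈ degreeLT An N) (haN : aN ∈ An N)
    (hb' : b' ∈ degreeLT Bn N) (hbN : bN ∈ Bn N)
    (h : (δ₀ + δ₁) (a' + aN) + d (b' + bN) = 0) : δ₁ aN + d bN = 0 := by
  have htop : δ₁ aN + d bN ∈ An (N + 1) := add_mem (hδ₁ N aN haN) (hd N bN hbN)
  have hrest : δ₀ a' + δ₁ a' + d b' + δ₀ aN ∈ degreeLT An (N + 1) := by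
    refine add_mem (add_mem (add_mem ?_ ?_) ?_) (le_degreeLT_succ An N (hδ₀ N aN haN))
    · exact degreeLT_mono An N.le_succ (map_mem_degreeLT hδ₀ ha')
    · exact map_mem_degreeLT hδ₁ ha'
    · exact map_mem_degreeLT hd hb'
  refine (Submodule.disjoint_iff_add_eq_zero.1 (disjoint_degreeLT hA (N + 1)) htop hrest ?_).1
  rw [← h]
  simp only [map_add, LinearMap.add_apply]
  abel

theorem lower_solution_of_top_degree_eq (hA : iSupIndep An)
    (hδ₀ : ∀ n : ℕ, ∀ x ∈ An n, δ₀ x ∈ An (n + 0))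
    (hδ₁ : ∀ n : ℕ, ∀ x ∈ An n, δ₁ x ∈ An (n + 1))
    (hε₀ : ∀ n : ℕ, ∀ x ∈ Bn n, ε₀ x ∈ Bn (n + 0))
    (hε₁ : ∀ n : ℕ, ∀ x ∈ Bn n, ε₁ x ∈ Bn (n + 1))
    (hd : ∀ n : ℕ, ∀ x ∈ Bn n, d x ∈ An (n + 1))
    (hnil : (δ₀ + δ₁) ∘ₗ (δ₀ + δ₁) = 0)
    (hanti : (δ₀ + δ₁) ∘ₗ d + d ∘ₗ (ε₀ + ε₁) = 0)
    {m : ℕ} {a' e : A} {b' bN f : B} (ha' : a' ∈ degreeLT An (m + 1)) (he : e ∈ An m)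
    (hb' : b' ∈ degreeLT Bn (m + 1)) (hbN : bN ∈ Bn (m + 1)) (hf : f ∈ Bn m)
    (h : (δ₀ + δ₁) (a' + (δ₁ e + d f)) + d (b' + bN) = 0) :
    (δ₀ + δ₁) (a' - δ₀ e) + d (b' - ε₀ f) = 0 := by
  have ha₁ : a' - δ₀ e ∈ degreeLT An (m + 1) := sub_mem ha' (le_degreeLT_succ An m (hδ₀ m e he))
  have hb₁ : b' - ε₀ f ∈ degreeLT Bn (m + 1) := sub_mem hb' (le_degreeLT_succ Bn m (hε₀ m f hf))
  have hshift : (δ₀ + δ₁) (a' - δ₀ e + 0) + d (b' - ε₀ f + (bN - ε₁ f)) = 0 := by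
    convert map_sub_coboundary_add_eq_zero hnil hanti h e f using 3
    · simp only [LinearMap.add_apply]; abel
    · simp only [LinearMap.add_apply]; abel
  have hdc : d (bN - ε₁ f) = 0 := by
    simpa using top_degree_part_eq_zero hA hδ₀ hδ₁ hd ha₁ (zero_mem _) hb₁
      (sub_mem hbN (hε₁ m f hf)) hshift
  rwa [add_zero, map_add, hdc, add_zero] at hshift

theorem mem_range_sup_range_of_mem_degreeLT (hA : iSupIndep An)
    (hδ₀ : ∀ n : ℕ, ∀ x ∈ An n, δ₀ x ∈ An (n + 0))
    (hδ₁ : ∀ n : ℕ, ∀ x ∈ An n, δ₁ x ∈ An (n + 1))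
    (hε₀ : ∀ n : ℕ, ∀ x ∈ Bn n, ε₀ x ∈ Bn (n + 0))
    (hε₁ : ∀ n : ℕ, ∀ x ∈ Bn n, ε₁ x ∈ Bn (n + 1))
    (hd : ∀ n : ℕ, ∀ x ∈ Bn n, d x ∈ An (n + 1))
    (hnil : (δ₀ + δ₁) ∘ₗ (δ₀ + δ₁) = 0)
    (hanti : (δ₀ + δ₁) ∘ₗ d + d ∘ₗ (ε₀ + ε₁) = 0)
    (hii : ∀ n : ℕ, ∀ a ∈ An (n + 1), ∀ b ∈ Bn (n + 1), δ₁ a + d b = 0 →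
      ∃ e ∈ An n, ∃ f ∈ Bn n, a = δ₁ e + d f)
    (hii₀ : ∀ a ∈ An 0, ∀ b ∈ Bn 0, δ₁ a + d b = 0 → a = 0) (N : ℕ) :
    ∀ a ∈ degreeLT An N, ∀ b ∈ degreeLT Bn N, (δ₀ + δ₁) a + d b = 0 →
      a ∈ LinearMap.range (δ₀ + δ₁) ⊔ LinearMap.range d := by
  induction N with
  | zero =>
    intro a ha _ _ _
    rw [degreeLT_zero, Submodule.mem_bot] at ha
    exact ha ▸ zero_mem _
  | succ N ih =>
    intro a ha b hb h
    rw [degreeLT_succ, Submodule.mem_sup] at ha hb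
    obtain ⟨a', ha', aN, haN, rfl⟩ := ha
    obtain ⟨b', hb', bN, hbN, rfl⟩ := hb
    have htop := top_degree_part_eq_zero hA hδ₀ hδ₁ hd ha' haN hb' hbN h
    cases N with
    | zero =>
      rw [degreeLT_zero, Submodule.mem_bot] at ha'
      rw [ha', hii₀ aN haN bN hbN htop, add_zero]
      exact zero_mem _
    | succ m =>
      obtain ⟨e, he, f, hf, rfl⟩ := hii m aN haN bN hbN htop
      have hlower := ih _ (sub_mem ha' (le_degreeLT_succ An m (hδ₀ m e he)))
        _ (sub_mem hb' (le_degreeLT_succ Bn m (hε₀ m f hf)))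
        (lower_solution_of_top_degree_eq hA hδ₀ hδ₁ hε₀ hε₁ hd hnil hanti ha' he hb' hbN hf h)
      have hsplit : a' + (δ₁ e + d f) = (a' - δ₀ e) + (δ₀ + δ₁) e + d f := by
        simp only [LinearMap.add_apply]; abel
      rw [hsplit]
      refine add_mem (add_mem hlower ?_) ?_
      · exact Submodule.mem_sup_left (LinearMap.mem_range_self _ e)
      · exact Submodule.mem_sup_right (LinearMap.mem_range_self _ f)

end Complex

theorem filtration_relative_acyclicity_general
    {R A B : Type} [CommRing R]
    [AddCommGroup A] [Module R A] [AddCommGroup B] [Module R B]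
    (An : ℕ → Submodule R A) (Bn : ℕ → Submodule R B)
    (hA : DirectSum.IsInternal An) (hB : DirectSum.IsInternal Bn)
    (δ₀ δ₁ : A →ₗ[R] A) (ε₀ ε₁ : B →ₗ[R] B) (d : B →ₗ[R] A)
    (hδ₀ : ∀ n : ℕ, ∀ x ∈ An n, δ₀ x ∈ An (n + 0))
    (hδ₁ : ∀ n : ℕ, ∀ x ∈ An n, δ₁ x ∈ An (n + 1))
    (hε₀ : ∀ n : ℕ, ∀ x ∈ Bn n, ε₀ x ∈ Bn (n + 0))
    (hε₁ : ∀ n : ℕ, ∀ x ∈ Bn n, ε₁ x ∈ Bn (n + 1))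
    (hd : ∀ n : ℕ, ∀ x ∈ Bn n, d x ∈ An (n + 1))
    (hnil : (δ₀ + δ₁) ∘ₗ (δ₀ + δ₁) = 0)
    (hanti : (δ₀ + δ₁) ∘ₗ d + d ∘ₗ (ε₀ + ε₁) = 0)
    (hii : ∀ n : ℕ, ∀ a ∈ An (n + 1), ∀ b ∈ Bn (n + 1), δ₁ a + d b = 0 →
      ∃ e ∈ An n, ∃ f ∈ Bn n, a = δ₁ e + d f)
    (hii₀ : ∀ a ∈ An 0, ∀ b ∈ Bn 0, δ₁ a + d b = 0 → a = 0) :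
    ∀ (a : A) (b : B), (δ₀ + δ₁) a + d b = 0 →
      ∃ (e : A) (f : B), a = (δ₀ + δ₁) e + d f := by
  intro a b h
  obtain ⟨N, ha⟩ := exists_mem_degreeLT hA.submodule_iSup_eq_top a
  obtain ⟨M, hb⟩ := exists_mem_degreeLT hB.submodule_iSup_eq_top b
  have hmem := mem_range_sup_range_of_mem_degreeLT hA.submodule_iSupIndep hδ₀ hδ₁ hε₀ hε₁ hd
    hnil hanti hii hii₀ (max N M) a (degreeLT_mono An (le_max_left N M) ha)
    b (degreeLT_mono Bn (le_max_right N M) hb) h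
  obtain ⟨_, ⟨e, rfl⟩, _, ⟨f, rfl⟩, hef⟩ := Submodule.mem_sup.1 hmem
  exact ⟨e, f, hef.symm⟩

/-- Filtration argument for relative (mod-`d̃`) acyclicity: with `A`, `B`, `C`
internally ℕ-graded, `δ = δ₀ + δ₁` (degrees `0` and `1`) a differential on `A`,
`ε = ε₀ + ε₁` (degrees `0` and `1`) on `B`, `d : B → A` and `d' : C → B` of
degree `1` with `δd + dε = 0`, `δ₁d + dε₁ = 0`, `dd' = 0`, and assuming the
graded acyclicity hypotheses (i) and (ii) for `δ₁` modulo `d`, every solution of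
`δa + db = 0` satisfies `a = δe + df` for some `e`, `f`. -/
theorem filtration_relative_acyclicity
    {R A B C : Type} [CommRing R]
    [AddCommGroup A] [Module R A] [AddCommGroup B] [Module R B]
    [AddCommGroup C] [Module R C]
    (An : ℕ → Submodule R A) (Bn : ℕ → Submodule R B) (Cn : ℕ → Submodule R C)
    (hA : DirectSum.IsInternal An) (hB : DirectSum.IsInternal Bn)
    (hC : DirectSum.IsInternal Cn)
    (δ₀ δ₁ : A →ₗ[R] A) (ε₀ ε₁ : B →ₗ[R] B) (d : B →ₗ[R] A) (d' : C →ₗ[R] B)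
    (hδ₀ : ∀ n : ℕ, ∀ x ∈ An n, δ₀ x ∈ An (n + 0))
    (hδ₁ : ∀ n : ℕ, ∀ x ∈ An n, δ₁ x ∈ An (n + 1))
    (hε₀ : ∀ n : ℕ, ∀ x ∈ Bn n, ε₀ x ∈ Bn (n + 0))
    (hε₁ : ∀ n : ℕ, ∀ x ∈ Bn n, ε₁ x ∈ Bn (n + 1))
    (hd : ∀ n : ℕ, ∀ x ∈ Bn n, d x ∈ An (n + 1))
    (hd' : ∀ n : ℕ, ∀ x ∈ Cn n, d' x ∈ Bn (n + 1))
    (hnil : (δ₀ + δ₁) ∘ₗ (δ₀ + δ₁) = 0)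
    (hanti : (δ₀ + δ₁) ∘ₗ d + d ∘ₗ (ε₀ + ε₁) = 0)
    (hanti₁ : δ₁ ∘ₗ d + d ∘ₗ ε₁ = 0)
    (hdd' : d ∘ₗ d' = 0)
    (hi : ∀ n : ℕ, ∀ b ∈ Bn (n + 1), d b = 0 → ∃ c ∈ Cn n, d' c = b)
    (hii : ∀ n : ℕ, ∀ a ∈ An (n + 1), ∀ b ∈ Bn (n + 1), δ₁ a + d b = 0 →
      ∃ e ∈ An n, ∃ f ∈ Bn n, a = δ₁ e + d f)
    (hii₀ : ∀ a ∈ An 0, ∀ b ∈ Bn 0, δ₁ a + d b = 0 → a = 0) :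
    ∀ (a : A) (b : B), (δ₀ + δ₁) a + d b = 0 →
      ∃ (e : A) (f : B), a = (δ₀ + δ₁) e + d f :=
  filtration_relative_acyclicity_general An Bn hA hB δ₀ δ₁ ε₀ ε₁ d hδ₀ hδ₁ hε₀ hε₁ hd hnil hanti hii
    hii₀
end
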